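/- Let H be a real Hilbert space, A : H → H a continuous linear skew-adjoint operator, F : ℝ → H continuous, and u : ℝ → H a C¹ solution of u'(t) + A(u(t)) = F(t) on [0, T]. Then for all t ∈ [0, T], ‖u(t)‖ ≤ ‖u(0)‖ + 2 ∫₀ᵀ ‖F(s)‖ ds. -/

import Mathlib

/-!
Skew-adjointness kills the `A`-term in the energy identity, so `(d/dt) ‖u‖² = 2 ⟪F, u⟫`.
With `M` the maximum of `‖u‖` on `[0, T]`, attained at some `t₀`, this gives
`‖u t‖² ≤ ‖u 0‖² + 2 M ∫₀ᵀ ‖F‖` for every `t`; at `t = t₀` it is a quadratic inequality in `M`,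
which forces `M ≤ ‖u 0‖ + 2 ∫₀ᵀ ‖F‖`.
-/

open RealInnerProductSpace Set

theorem le_add_of_sq_le_sq_add_mul {x β γ : ℝ} (hβ : 0 ≤ β) (hγ : 0 ≤ γ)
    (h : x ^ 2 ≤ γ ^ 2 + β * x) : x ≤ γ + β := by
  nlinarith

section Energy

variable {H : Type*} [NormedAddCommGroup H] [InnerProductSpace ℝ H]

theorem inner_apply_self_eq_zero_of_skew {A : H → H} (hA : ∀ x y : H, ⟪A x, y⟫ = -⟪x, A y⟫)
    (x : H) : ⟪A x, x⟫ = 0 := by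
  linarith [hA x x, real_inner_comm x (A x)]

theorem HasDerivAt.norm_sq_of_add_skew {A : H → H} (hA : ∀ x y : H, ⟪A x, y⟫ = -⟪x, A y⟫)
    {u : ℝ → H} {v f : H} {t : ℝ} (hu : HasDerivAt u v t) (heq : v + A (u t) = f) :
    HasDerivAt (‖u ·‖ ^ 2) (2 * ⟪f, u t⟫) t := by
  convert hu.norm_sq using 1
  rw [← heq, inner_add_left, inner_apply_self_eq_zero_of_skew hA, add_zero, real_inner_comm]

theorem sq_norm_le_of_add_skew {A : H → H} (hA : ∀ x y : H, ⟪A x, y⟫ = -⟪x, A y⟫)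
    {a b : ℝ} {F u u' : ℝ → H} (hF : ContinuousOn F (Icc a b))
    (hu : ∀ t ∈ Icc a b, HasDerivAt u (u' t) t) (heq : ∀ t ∈ Icc a b, u' t + A (u t) = F t)
    {M : ℝ} (hM : ∀ t ∈ Icc a b, ‖u t‖ ≤ M) {t : ℝ} (ht : t ∈ Icc a b) :
    ‖u t‖ ^ 2 ≤ ‖u a‖ ^ 2 + 2 * M * ∫ s in a..b, ‖F s‖ := by
  have hM0 : 0 ≤ M := (norm_nonneg _).trans (hM t ht)
  have hsub : Icc a t ⊆ Icc a b := Icc_subset_Icc_right ht.2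
  have hFint : IntervalIntegrable (‖F ·‖) MeasureTheory.volume a b :=
    hF.norm.intervalIntegrable_of_Icc (ht.1.trans ht.2)
  have henergy : ‖u t‖ ^ 2 - ‖u a‖ ^ 2 ≤ ∫ s in a..t, 2 * M * ‖F s‖ := by
    refine intervalIntegral.sub_le_integral_of_hasDeriv_right_of_le ht.1
      (fun s hs => (hu s (hsub hs)).continuousAt.norm.pow 2 |>.continuousWithinAt)
      (fun s hs => (HasDerivAt.norm_sq_of_add_skew hA (hu s (hsub (Ioo_subset_Icc_self hs)))
        (heq s (hsub (Ioo_subset_Icc_self hs)))).hasDerivWithinAt)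
      ((hF.mono hsub).norm.integrableOn_Icc.const_mul _) fun s hs => ?_
    have hs' := hsub (Ioo_subset_Icc_self hs)
    calc 2 * ⟪F s, u s⟫ ≤ 2 * (‖F s‖ * ‖u s‖) := by gcongr; exact real_inner_le_norm _ _
      _ ≤ 2 * M * ‖F s‖ := by nlinarith [hM s hs', norm_nonneg (F s)]
  have hmono : ∫ s in a..t, ‖F s‖ ≤ ∫ s in a..b, ‖F s‖ :=
    intervalIntegral.integral_mono_interval le_rfl ht.1 ht.2
      (Filter.Eventually.of_forall fun _ => norm_nonneg _) hFint
  rw [intervalIntegral.integral_const_mul] at henergy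
  nlinarith

end Energy

theorem energy_estimate_inhomogeneous_general
    {H : Type*} [NormedAddCommGroup H] [InnerProductSpace ℝ H]
    (A : H →L[ℝ] H) (hA : ∀ x y : H, ⟪A x, y⟫ = -⟪x, A y⟫)
    (T : ℝ) (F : ℝ → H) (hF : ContinuousOn F (Set.Icc 0 T))
    (u u' : ℝ → H)
    (hu : ∀ t ∈ Set.Icc (0:ℝ) T, HasDerivAt u (u' t) t)
    (heq : ∀ t ∈ Set.Icc (0:ℝ) T, u' t + A (u t) = F t) :
    ∀ t ∈ Set.Icc (0:ℝ) T, ‖u t‖ ≤ ‖u 0‖ + 2 * ∫ s in (0:ℝ)..T, ‖F s‖ := by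
  intro t ht
  have hT : 0 ≤ T := ht.1.trans ht.2
  obtain ⟨t₀, ht₀, hmax⟩ := isCompact_Icc.exists_isMaxOn (nonempty_Icc.2 hT)
    (fun s hs => (hu s hs).continuousAt.norm.continuousWithinAt)
  have hM := sq_norm_le_of_add_skew hA hF hu heq (fun _ hs => hmax hs) ht₀
  have hI : 0 ≤ ∫ s in (0:ℝ)..T, ‖F s‖ :=
    intervalIntegral.integral_nonneg hT fun _ _ => norm_nonneg _
  refine (hmax ht).trans (le_add_of_sq_le_sq_add_mul (by positivity) (norm_nonneg _) ?_)
  linarith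

theorem energy_estimate_inhomogeneous
    {H : Type*} [NormedAddCommGroup H] [InnerProductSpace ℝ H] [CompleteSpace H]
    (A : H →L[ℝ] H) (hA : ∀ x y : H, ⟪A x, y⟫ = -⟪x, A y⟫)
    (T : ℝ) (hT : 0 ≤ T) (F : ℝ → H) (hF : ContinuousOn F (Set.Icc 0 T))
    (u u' : ℝ → H)
    (hu : ∀ t ∈ Set.Icc (0:ℝ) T, HasDerivAt u (u' t) t)
    (hu' : ContinuousOn u' (Set.Icc 0 T))
    (heq : ∀ t ∈ Set.Icc (0:ℝ) T, u' t + A (u t) = F t) :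
    ∀ t ∈ Set.Icc (0:ℝ) T, ‖u t‖ ≤ ‖u 0‖ + 2 * ∫ s in (0:ℝ)..T, ‖F s‖ :=
  energy_estimate_inhomogeneous_general A hA T F hF u u' hu heq
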